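/- arXiv:2602.17361 — 2 statements merged into one kernel-verified Lean document; each statement's English description precedes it below -/
import Mathlib

section
/- The first Krylov bound equals B_1 = (tr(i[ρ,H] i[ρ,H]))² / tr(i[ρ,H] R_ρ(i[ρ,H])), and it is a lower bound for the quantum Fisher information F_Q. -/
open Matrix BigOperators Finset
open scoped Classical

namespace KST

variable {d : ℕ}

/-- Weighted inner product ⟨X,Y⟩_ρ = Re tr(ρ(XY+YX))/2. -/
noncomputable def wip (ρ X Y : Matrix (Fin d) (Fin d) ℂ) : ℝ :=
  (((ρ * (X * Y + Y * X)).trace) / 2).re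

/-- Membership in 𝒳: Hermitian with ⟨k|X|l⟩ = 0 whenever p_k = p_l = 0. -/
def memX (p : Fin d → ℝ) (v : Fin d → (Fin d → ℂ)) (X : Matrix (Fin d) (Fin d) ℂ) : Prop :=
  X.IsHermitian ∧ ∀ k l, p k = 0 → p l = 0 → star (v k) ⬝ᵥ X.mulVec (v l) = 0

/-- The superoperator R_ρ(X) = (ρX + Xρ)/2. -/
noncomputable def Rop (ρ : Matrix (Fin d) (Fin d) ℂ) (X : Matrix (Fin d) (Fin d) ℂ) :
    Matrix (Fin d) (Fin d) ℂ :=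
  (1/2 : ℂ) • (ρ * X + X * ρ)

/-- The operator i[ρ,H]. -/
noncomputable def comm (ρ H : Matrix (Fin d) (Fin d) ℂ) : Matrix (Fin d) (Fin d) ℂ :=
  Complex.I • (ρ * H - H * ρ)

/-- Krylov subspace 𝒦_n = span_ℝ {R_ρ^k(i[ρ,H]) : 0 ≤ k ≤ n-1}. -/
noncomputable def K (ρ H : Matrix (Fin d) (Fin d) ℂ) (n : ℕ) :
    Submodule ℝ (Matrix (Fin d) (Fin d) ℂ) :=
  Submodule.span ℝ ((fun k => (Rop ρ)^[k] (comm ρ H)) '' (Set.Iio n))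

/-- Quantum Fisher information (spectral formula). -/
noncomputable def FQ (p : Fin d → ℝ) (v : Fin d → (Fin d → ℂ))
    (H : Matrix (Fin d) (Fin d) ℂ) : ℝ :=
  2 * ∑ k, ∑ l, if 0 < p k + p l then
    (p k - p l)^2 / (p k + p l) * Complex.normSq (star (v k) ⬝ᵥ H.mulVec (v l)) else 0

/-- T_k = tr(i[ρ,H] R_ρ^k(i[ρ,H])). -/
noncomputable def Tk (ρ H : Matrix (Fin d) (Fin d) ℂ) (k : ℕ) : ℝ :=
  ((comm ρ H * (Rop ρ)^[k] (comm ρ H)).trace).re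

/-- P is the orthogonal projection of L onto 𝒦_n w.r.t. ⟨·,·⟩_ρ. -/
def IsProj (ρ H : Matrix (Fin d) (Fin d) ℂ) (n : ℕ)
    (L P : Matrix (Fin d) (Fin d) ℂ) : Prop :=
  P ∈ K ρ H n ∧ ∀ Y ∈ K ρ H n, wip ρ (L - P) Y = 0

/- ### auxiliary lemmas -/

lemma conj_mul (U A B : Matrix (Fin d) (Fin d) ℂ) (hU1 : Uᴴ * U = 1) :
    (U * A * Uᴴ) * (U * B * Uᴴ) = U * (A * B) * Uᴴ := by
  calc (U * A * Uᴴ) * (U * B * Uᴴ) = U * A * (Uᴴ * U) * B * Uᴴ := by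
        simp only [Matrix.mul_assoc]
    _ = U * (A * B) * Uᴴ := by rw [hU1]; simp only [Matrix.mul_one, Matrix.mul_assoc]

lemma trace_conj (U A B : Matrix (Fin d) (Fin d) ℂ) (hU1 : Uᴴ * U = 1) :
    ((U * A * Uᴴ) * (U * B * Uᴴ)).trace = (A * B).trace := by
  rw [conj_mul U A B hU1, Matrix.trace_mul_cycle, ← Matrix.mul_assoc, hU1, Matrix.one_mul]

lemma dot_eq (v : Fin d → (Fin d → ℂ)) (H : Matrix (Fin d) (Fin d) ℂ) (k l : Fin d) :
    star (v k) ⬝ᵥ H.mulVec (v l)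
      = ((Matrix.of (fun i k => v k i))ᴴ * H * (Matrix.of (fun i k => v k i))) k l := by
  simp only [Matrix.mul_apply, dotProduct, Matrix.mulVec, Matrix.conjTranspose_apply,
    Matrix.of_apply, Pi.star_apply, Finset.mul_sum, Finset.sum_mul]
  rw [Finset.sum_comm]
  exact Finset.sum_congr rfl fun i _ => Finset.sum_congr rfl fun j _ => by
    simp [dotProduct]; ring

lemma key_term (b m : ℂ) :
    (Complex.I * b * m) * (Complex.I * (-b) * (starRingEnd ℂ) m)
      = b^2 * ((Complex.normSq m : ℝ) : ℂ) := by
  have h : (Complex.I * b * m) * (Complex.I * (-b) * (starRingEnd ℂ) m)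
      = -((Complex.I * Complex.I) * ((b * b) * (m * (starRingEnd ℂ) m))) := by ring
  rw [h, Complex.I_mul_I, Complex.mul_conj]
  ring

lemma wip_eq (ρ X Y : Matrix (Fin d) (Fin d) ℂ) :
    wip ρ X Y = ((ρ * (X * Y + Y * X)).trace).re / 2 := by
  rw [wip, show (2:ℂ) = ((2:ℝ):ℂ) by norm_cast, Complex.div_ofReal_re]

lemma wip_comm (ρ X Y : Matrix (Fin d) (Fin d) ℂ) : wip ρ X Y = wip ρ Y X := by
  rw [wip, wip, add_comm (X * Y)]

lemma wip_sub (ρ X X' Y : Matrix (Fin d) (Fin d) ℂ) :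
    wip ρ (X - X') Y = wip ρ X Y - wip ρ X' Y := by
  simp only [wip_eq, Matrix.sub_mul, Matrix.mul_sub, Matrix.mul_add, sub_add_sub_comm,
    Matrix.trace_sub, Complex.sub_re]
  ring

lemma wip_smul (ρ X Y : Matrix (Fin d) (Fin d) ℂ) (t : ℝ) :
    wip ρ (t • X) Y = t * wip ρ X Y := by
  simp only [wip_eq, Matrix.smul_mul, Matrix.mul_smul, ← smul_add, Matrix.trace_smul,
    Complex.real_smul, Complex.re_ofReal_mul]
  ring


/-- The first Krylov bound B_1 = T_0²/T_1 is a lower bound on the QFI. -/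
theorem stmt15 {d : ℕ} (ρ : Matrix (Fin d) (Fin d) ℂ) (p : Fin d → ℝ) (v : Fin d → (Fin d → ℂ))
    (hρ : ρ = ∑ k, (p k : ℂ) • vecMulVec (v k) (star (v k)))
    (horth : ∀ k l, star (v k) ⬝ᵥ v l = (if k = l then 1 else 0))
    (hppos : ∀ k, 0 ≤ p k) (hptr : ∑ k, p k = 1) (H : Matrix (Fin d) (Fin d) ℂ) (hH : H.IsHermitian)
    (hC : comm ρ H ≠ 0)
    (L : Matrix (Fin d) (Fin d) ℂ) (hLX : memX p v L) (hL : Rop ρ L = comm ρ H) :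
    (Tk ρ H 0) ^ 2 / Tk ρ H 1 ≤ FQ p v H ∧
    (∀ P, IsProj ρ H 1 L P → wip ρ P P = (Tk ρ H 0) ^ 2 / Tk ρ H 1) := by
  -- setup: unitary U, diagonal D, transformed M
  set U : Matrix (Fin d) (Fin d) ℂ := Matrix.of (fun i k => v k i) with hUdef
  have hU1 : Uᴴ * U = 1 := by
    ext k l
    simpa [hUdef, Matrix.mul_apply, Matrix.conjTranspose_apply, dotProduct,
      Matrix.one_apply] using horth k l
  have hU2 : U * Uᴴ = 1 := mul_eq_one_comm.mpr hU1
  set D : Matrix (Fin d) (Fin d) ℂ := Matrix.diagonal (fun k => (p k : ℂ)) with hDdef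
  set M : Matrix (Fin d) (Fin d) ℂ := Uᴴ * H * U with hMdef
  have hρU : ρ = U * D * Uᴴ := by
    rw [hρ]
    ext i j
    rw [Matrix.mul_assoc]
    simp only [hDdef, hUdef, Matrix.mul_apply, Matrix.sum_apply, Matrix.smul_apply,
      vecMulVec_apply, Matrix.diagonal_apply, Matrix.conjTranspose_apply, Matrix.of_apply,
      Pi.star_apply, smul_eq_mul, ite_mul, zero_mul, Finset.sum_ite_eq, Finset.mem_univ, if_true]
    refine Finset.sum_congr rfl fun k _ => by ring
  have hHU : H = U * M * Uᴴ := by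
    rw [hMdef, ← Matrix.mul_assoc, ← Matrix.mul_assoc, hU2, Matrix.one_mul, Matrix.mul_assoc,
      hU2, Matrix.mul_one]
  have hM : M.IsHermitian := by
    rw [Matrix.IsHermitian, hMdef]
    simp [Matrix.conjTranspose_mul, Matrix.mul_assoc, hH.eq]
  have hMconj : ∀ k l, M l k = (starRingEnd ℂ) (M k l) := fun k l => (hM.apply l k).symm
  set C' : Matrix (Fin d) (Fin d) ℂ := Complex.I • (D * M - M * D) with hC'def
  have hCU : comm ρ H = U * C' * Uᴴ := by
    rw [comm, hC'def]
    have h1 : ρ * H = U * (D * M) * Uᴴ := by rw [hρU, hHU]; exact conj_mul U D M hU1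
    have h2 : H * ρ = U * (M * D) * Uᴴ := by rw [hρU, hHU]; exact conj_mul U M D hU1
    rw [h1, h2]
    simp only [Matrix.mul_smul, Matrix.smul_mul, Matrix.mul_sub, Matrix.sub_mul, smul_sub]
  set R' : Matrix (Fin d) (Fin d) ℂ := (1/2 : ℂ) • (D * C' + C' * D) with hR'def
  have hRopC : Rop ρ (comm ρ H) = U * R' * Uᴴ := by
    rw [Rop, hR'def, hCU, hρU]
    rw [conj_mul U D C' hU1, conj_mul U C' D hU1]
    simp only [Matrix.mul_smul, Matrix.smul_mul, smul_add, Matrix.mul_add, Matrix.add_mul]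
  have hC'app : ∀ k l, C' k l = Complex.I * (((p k : ℂ)) - (p l : ℂ)) * M k l := by
    intro k l
    simp only [hC'def, hDdef, Matrix.smul_apply, Matrix.sub_apply, Matrix.diagonal_mul,
      Matrix.mul_diagonal, smul_eq_mul]
    ring
  have hR'app : ∀ k l, R' k l = (1/2 : ℂ) * (((p k : ℂ)) + (p l : ℂ)) * C' k l := by
    intro k l
    simp only [hR'def, hDdef, Matrix.smul_apply, Matrix.add_apply, Matrix.diagonal_mul,
      Matrix.mul_diagonal, smul_eq_mul, hC'def, Matrix.sub_apply]
    ring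
  -- the real coefficient array
  set x : Fin d → Fin d → ℝ := fun k l => (p k - p l)^2 * Complex.normSq (M k l) with hxdef
  have hxnn : ∀ k l, 0 ≤ x k l := fun k l =>
    mul_nonneg (sq_nonneg _) (Complex.normSq_nonneg _)
  have hpnn : ∀ i j : Fin d, (0:ℝ) ≤ (p i + p j)/2 :=
    fun i j => div_nonneg (add_nonneg (hppos i) (hppos j)) (by norm_num)
  have htermnn : ∀ i j : Fin d, (0:ℝ) ≤ (p i + p j)/2 * x i j :=
    fun i j => mul_nonneg (hpnn i j) (hxnn i j)
  have hx0 : ∀ k l, ¬ (0 < p k + p l) → x k l = 0 := by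
    intro k l h
    have h1 : p k + p l = 0 := le_antisymm (not_lt.mp h) (add_nonneg (hppos k) (hppos l))
    have hk : p k = 0 := by nlinarith [hppos k, hppos l]
    have hl : p l = 0 := by nlinarith [hppos k, hppos l]
    simp [hxdef, hk, hl]
  -- spectral formulas for T0, T1, FQ
  have hT0 : Tk ρ H 0 = ∑ k, ∑ l, x k l := by
    rw [Tk, Function.iterate_zero, id_eq, hCU, trace_conj U C' C' hU1]
    have h : (C' * C').trace = ((∑ k, ∑ l, x k l : ℝ) : ℂ) := by
      rw [Matrix.trace]
      simp only [hxdef]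
      push_cast
      simp only [Matrix.diag_apply, Matrix.mul_apply]
      refine Finset.sum_congr rfl fun k _ => Finset.sum_congr rfl fun l _ => ?_
      rw [hC'app k l, hC'app l k, hMconj k l,
        show ((p l : ℂ)) - (p k : ℂ) = -(((p k : ℂ)) - (p l : ℂ)) by ring,
        key_term]
      try push_cast
      try ring
    rw [h, Complex.ofReal_re]
  have hT1 : Tk ρ H 1 = ∑ k, ∑ l, (p k + p l)/2 * x k l := by
    rw [Tk, Function.iterate_one, hRopC, hCU, trace_conj U C' R' hU1]
    have h : (C' * R').trace = ((∑ k, ∑ l, (p k + p l)/2 * x k l : ℝ) : ℂ) := by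
      rw [Matrix.trace]
      simp only [hxdef]
      push_cast
      simp only [Matrix.diag_apply, Matrix.mul_apply]
      refine Finset.sum_congr rfl fun k _ => Finset.sum_congr rfl fun l _ => ?_
      rw [hR'app l k, hC'app k l, hC'app l k, hMconj k l,
        show ((p l : ℂ)) - (p k : ℂ) = -(((p k : ℂ)) - (p l : ℂ)) by ring]
      rw [show Complex.I * (((p k : ℂ)) - (p l : ℂ)) * M k l *
            ((1/2 : ℂ) * (((p l : ℂ)) + (p k : ℂ)) *
              (Complex.I * -(((p k : ℂ)) - (p l : ℂ)) * (starRingEnd ℂ) (M k l)))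
          = (1/2 : ℂ) * (((p l : ℂ)) + (p k : ℂ)) *
            ((Complex.I * (((p k : ℂ)) - (p l : ℂ)) * M k l) *
              (Complex.I * (-(((p k : ℂ)) - (p l : ℂ))) * (starRingEnd ℂ) (M k l))) by ring,
        key_term]
      push_cast
      ring
    rw [h, Complex.ofReal_re]
  have hFQx : FQ p v H = 2 * ∑ k, ∑ l, (if 0 < p k + p l then x k l / (p k + p l) else 0) := by
    rw [FQ]
    congr 1
    refine Finset.sum_congr rfl fun k _ => Finset.sum_congr rfl fun l _ => ?_
    rw [dot_eq v H k l, ← hUdef, ← hMdef]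
    split
    · rw [hxdef]; ring
    · rfl
  -- positivity of T1
  have hT1pos : 0 < Tk ρ H 1 := by
    have hC'ne : C' ≠ 0 := by
      intro h
      apply hC
      rw [hCU, h, Matrix.mul_zero, Matrix.zero_mul]
    have hex : ∃ k l, C' k l ≠ 0 := by
      by_contra hcon
      push_neg at hcon
      exact hC'ne (Matrix.ext fun k l => by simpa using hcon k l)
    obtain ⟨k, l, hl⟩ := hex
    rw [hC'app k l] at hl
    have hb : (((p k : ℂ)) - (p l : ℂ)) ≠ 0 := by
      intro h; apply hl; rw [h]; ring
    have hm : M k l ≠ 0 := by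
      intro h; apply hl; rw [h]; ring
    have hpne : p k ≠ p l := by
      intro h; exact hb (by rw [h]; ring)
    have hs : 0 < p k + p l := by
      rcases (hppos k).lt_or_eq with h | h
      · linarith [hppos l]
      · rcases (hppos l).lt_or_eq with h' | h'
        · linarith
        · exact absurd (h.symm.trans h') hpne
    have hxpos : 0 < x k l := by
      apply mul_pos
      · have hne : p k - p l ≠ 0 := sub_ne_zero.mpr hpne
        exact lt_of_le_of_ne (sq_nonneg _) (Ne.symm (pow_ne_zero 2 hne))
      · exact Complex.normSq_pos.mpr hm
    rw [hT1]
    have hterm : 0 < (p k + p l)/2 * x k l := mul_pos (by linarith [hppos k, hppos l]) hxpos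
    calc (0:ℝ) < (p k + p l)/2 * x k l := hterm
      _ ≤ ∑ l', (p k + p l')/2 * x k l' :=
          Finset.single_le_sum (f := fun l' => (p k + p l')/2 * x k l')
            (fun j _ => htermnn k j) (Finset.mem_univ l)
      _ ≤ ∑ k', ∑ l', (p k' + p l')/2 * x k' l' :=
          Finset.single_le_sum (f := fun k' => ∑ l', (p k' + p l')/2 * x k' l')
            (fun i _ => Finset.sum_nonneg fun j _ => htermnn i j) (Finset.mem_univ k)
  -- Cauchy–Schwarz
  have hCS : (Tk ρ H 0)^2 ≤ Tk ρ H 1 * FQ p v H := by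
    set F : Fin d × Fin d → ℝ := fun z => Real.sqrt (x z.1 z.2) * Real.sqrt ((p z.1 + p z.2)/2)
      with hFdef
    set G : Fin d × Fin d → ℝ := fun z =>
      if 0 < p z.1 + p z.2 then Real.sqrt (x z.1 z.2) * Real.sqrt (2/(p z.1 + p z.2)) else 0
      with hGdef
    have hFG : ∀ z : Fin d × Fin d, F z * G z = x z.1 z.2 := by
      intro z
      rw [hFdef, hGdef]
      by_cases h : 0 < p z.1 + p z.2
      · simp only [if_pos h]
        rw [show Real.sqrt (x z.1 z.2) * Real.sqrt ((p z.1 + p z.2)/2) *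
            (Real.sqrt (x z.1 z.2) * Real.sqrt (2/(p z.1 + p z.2)))
          = (Real.sqrt (x z.1 z.2) * Real.sqrt (x z.1 z.2)) *
            (Real.sqrt ((p z.1 + p z.2)/2) * Real.sqrt (2/(p z.1 + p z.2))) by ring,
          Real.mul_self_sqrt (hxnn _ _), ← Real.sqrt_mul (hpnn _ _)]
        have hne : p z.1 + p z.2 ≠ 0 := ne_of_gt h
        rw [show (p z.1 + p z.2)/2 * (2/(p z.1 + p z.2)) = 1 by field_simp, Real.sqrt_one,
          mul_one]
      · simp only [if_neg h, mul_zero]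
        exact (hx0 _ _ h).symm
    have hF2 : ∀ z : Fin d × Fin d, F z^2 = (p z.1 + p z.2)/2 * x z.1 z.2 := by
      intro z
      rw [hFdef, mul_pow, Real.sq_sqrt (hxnn _ _), Real.sq_sqrt (hpnn _ _)]
      ring
    have hG2 : ∀ z : Fin d × Fin d, G z^2
        = if 0 < p z.1 + p z.2 then 2 * (x z.1 z.2 / (p z.1 + p z.2)) else 0 := by
      intro z
      rw [hGdef]
      by_cases h : 0 < p z.1 + p z.2
      · simp only [if_pos h]
        rw [mul_pow, Real.sq_sqrt (hxnn _ _), Real.sq_sqrt (div_nonneg (by norm_num) h.le)]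
        ring
      · simp only [if_neg h]
        ring
    have hsum0 : Tk ρ H 0 = ∑ z : Fin d × Fin d, F z * G z := by
      rw [hT0, ← Finset.univ_product_univ, Finset.sum_product]
      exact Finset.sum_congr rfl fun k _ => Finset.sum_congr rfl fun l _ => (hFG (k, l)).symm
    have hsum1 : Tk ρ H 1 = ∑ z : Fin d × Fin d, F z^2 := by
      rw [hT1, ← Finset.univ_product_univ, Finset.sum_product]
      exact Finset.sum_congr rfl fun k _ => Finset.sum_congr rfl fun l _ => (hF2 (k, l)).symm
    have hsum2 : FQ p v H = ∑ z : Fin d × Fin d, G z^2 := by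
      rw [hFQx, Finset.mul_sum, ← Finset.univ_product_univ, Finset.sum_product]
      refine Finset.sum_congr rfl fun k _ => ?_
      rw [Finset.mul_sum]
      refine Finset.sum_congr rfl fun l _ => ?_
      rw [hG2 (k, l)]
      split <;> ring
    rw [hsum0, hsum1, hsum2]
    exact Finset.sum_mul_sq_le_sq_mul_sq Finset.univ F G
  constructor
  · rw [div_le_iff₀ hT1pos]
    calc (Tk ρ H 0)^2 ≤ Tk ρ H 1 * FQ p v H := hCS
      _ = FQ p v H * Tk ρ H 1 := mul_comm _ _
  · -- projection part
    intro P hP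
    have hK1 : K ρ H 1 = Submodule.span ℝ {comm ρ H} := by
      rw [K]
      congr 1
      rw [show Set.Iio (1:ℕ) = {0} by ext n; simp [Nat.lt_one_iff]]
      simp
    obtain ⟨hPmem, hPorth⟩ := hP
    rw [hK1] at hPmem
    obtain ⟨t, ht⟩ := Submodule.mem_span_singleton.mp hPmem
    have hCmem : comm ρ H ∈ K ρ H 1 := by
      rw [hK1]; exact Submodule.mem_span_singleton_self _
    have h0 := hPorth (comm ρ H) hCmem
    rw [← ht, wip_sub, wip_smul] at h0
    -- wip identities
    have hwLC : wip ρ L (comm ρ H) = Tk ρ H 0 := by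
      have h2 : ρ * L + L * ρ = (2:ℂ) • comm ρ H := by
        rw [← hL, Rop, smul_smul]
        norm_num
      rw [wip_eq, Tk, Function.iterate_zero, id_eq]
      rw [show ρ * (L * comm ρ H + comm ρ H * L)
          = ρ * L * comm ρ H + ρ * (comm ρ H * L) by rw [Matrix.mul_add, Matrix.mul_assoc]]
      rw [Matrix.trace_add, show ρ * (comm ρ H * L) = ρ * comm ρ H * L from
        (Matrix.mul_assoc _ _ _).symm, Matrix.trace_mul_cycle ρ (comm ρ H) L,
        ← Matrix.trace_add, ← Matrix.add_mul, h2, Matrix.smul_mul, Matrix.trace_smul,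
        smul_eq_mul]
      simp [Complex.mul_re]
      try ring
    have hwCC : wip ρ (comm ρ H) (comm ρ H) = Tk ρ H 1 := by
      rw [wip_eq, Tk, Function.iterate_one, Rop]
      rw [show comm ρ H * ((1/2:ℂ) • (ρ * comm ρ H + comm ρ H * ρ))
          = (1/2:ℂ) • (comm ρ H * ρ * comm ρ H + comm ρ H * comm ρ H * ρ) by
        rw [Matrix.mul_smul, Matrix.mul_add, Matrix.mul_assoc, Matrix.mul_assoc]]
      rw [Matrix.trace_smul, Matrix.trace_add, Matrix.trace_mul_cycle (comm ρ H) ρ (comm ρ H),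
        Matrix.trace_mul_comm (comm ρ H * comm ρ H) ρ]
      simp [Matrix.mul_add, Matrix.trace_add, smul_eq_mul, Complex.mul_re, Complex.add_re,
        Matrix.mul_assoc]
      ring
    rw [hwLC, hwCC] at h0
    have hT1ne : Tk ρ H 1 ≠ 0 := ne_of_gt hT1pos
    have ht' : t = Tk ρ H 0 / Tk ρ H 1 := by
      field_simp
      linarith
    rw [← ht, wip_smul, wip_comm, wip_smul, hwCC, ht']
    field_simp

end KST
end

section
/- The (2n−1)-th Taylor bound is the ρ-norm-squared of a specific polynomial approximation to the SLD lying in the Krylov subspace 𝒦_n; consequently the n-th Krylov bound dominates it: B_{2n−1}^{Tay} ≤ B_n^{Kry} ≤ F_Q, equivalently (F_Q − B_n^{Kry})/F_Q ≤ (F_Q − B_{2n−1}^{Tay})/F_Q for all n ≥ 1. -/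
open Matrix BigOperators Finset
open scoped Classical

namespace KST

variable {d : ℕ}

/-- Spectral form of the Taylor bound. -/
noncomputable def BTaySum (p : Fin d → ℝ) (v : Fin d → (Fin d → ℂ))
    (H : Matrix (Fin d) (Fin d) ℂ) (n : ℕ) : ℝ :=
  2 * ∑ k, ∑ l, (p k - p l) ^ 2 *
    (∑ m ∈ Finset.range (n + 1), (1 - p k - p l) ^ m) *
    Complex.normSq (star (v k) ⬝ᵥ H.mulVec (v l))

end KST

/-! In the eigenbasis of `ρ`, `R_ρ` multiplies the `(k, l)` entry by `(p_k + p_l) / 2`. Hence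
`Z = 2 ∑_{m<n} (1 - 2R_ρ)^m (i[ρ,H])`, an element of `𝒦_n`, has entries
`2 S_{kl} · i (p_k - p_l) H_{kl}` with `S_{kl} = ∑_{m<n} (1 - p_k - p_l)^m`, and `R_ρ L = i[ρ,H]`
together with `∑_{m<2n} x^m = 2S - (1 - x) S²` gives `2⟨L,Z⟩_ρ - ‖Z‖_ρ² = B^{Tay}_{2n-1}`.
As `L - P` is `ρ`-orthogonal to `𝒦_n`, `⟨L,Z⟩_ρ = ⟨P,Z⟩_ρ`, so `0 ≤ ‖P - Z‖_ρ²` yields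
`B^{Tay}_{2n-1} ≤ ‖P‖_ρ²`, and Pythagoras yields `‖P‖_ρ² ≤ ‖L‖_ρ²`. -/

namespace LinearMap.BilinForm

variable {M : Type*} [AddCommGroup M] [Module ℝ M] (B : LinearMap.BilinForm ℝ M) {L P Z : M}

theorem apply_self_le_of_sub_orthogonal (hB : B.IsSymm) (hP : B (L - P) P = 0)
    (hLP : 0 ≤ B (L - P) (L - P)) : B P P ≤ B L L := by
  simp only [map_sub, LinearMap.sub_apply] at hP hLP
  linarith [hB.eq P L]

theorem two_mul_sub_le_of_sub_orthogonal (hB : B.IsSymm) (hZ : B (L - P) Z = 0)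
    (hPZ : 0 ≤ B (P - Z) (P - Z)) : 2 * B L Z - B Z Z ≤ B P P := by
  simp only [map_sub, LinearMap.sub_apply] at hZ hPZ
  linarith [hB.eq Z P]

end LinearMap.BilinForm

theorem geom_sum_range_two_mul {R : Type*} [CommRing R] (x : R) (n : ℕ) :
    ∑ m ∈ range (2 * n), x ^ m =
      2 * ∑ m ∈ range n, x ^ m - (1 - x) * (∑ m ∈ range n, x ^ m) ^ 2 := by
  rw [two_mul, sum_range_add]
  simp only [pow_add, ← mul_sum]
  linear_combination (-(∑ m ∈ range n, x ^ m)) * geom_sum_mul x n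

namespace KST

variable {d : ℕ}

noncomputable def wipForm (ρ : Matrix (Fin d) (Fin d) ℂ) :
    LinearMap.BilinForm ℝ (Matrix (Fin d) (Fin d) ℂ) :=
  LinearMap.mk₂ ℝ (wip ρ)
    (fun X X' Y => by simp only [wip, add_mul, mul_add, trace_add, add_div, Complex.add_re]; ring)
    (fun r X Y => by
      simp only [wip, smul_mul_assoc, mul_smul_comm, ← smul_add, trace_smul, smul_div_assoc,
        Complex.smul_re, smul_eq_mul])
    (fun X Y Y' => by simp only [wip, add_mul, mul_add, trace_add, add_div, Complex.add_re]; ring)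
    (fun r X Y => by
      simp only [wip, smul_mul_assoc, mul_smul_comm, ← smul_add, trace_smul, smul_div_assoc,
        Complex.smul_re, smul_eq_mul])

theorem wipForm_apply (ρ X Y : Matrix (Fin d) (Fin d) ℂ) : wipForm ρ X Y = wip ρ X Y := rfl

theorem wipForm_isSymm (ρ : Matrix (Fin d) (Fin d) ℂ) : (wipForm ρ).IsSymm :=
  ⟨fun X Y => by simp only [wipForm_apply, wip, add_comm (X * Y)]⟩

open ComplexOrder in
theorem wip_self_nonneg {ρ X : Matrix (Fin d) (Fin d) ℂ} (hρ : ρ.PosSemidef) (hX : X.IsHermitian) :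
    0 ≤ wip ρ X X := by
  have htr : (ρ * (X * X + X * X)).trace / 2 = (Xᴴ * ρ * X).trace := by
    rw [hX.eq, trace_mul_cycle, ← trace_mul_comm, add_mul, trace_add]
    ring
  rw [wip, htr]
  exact Complex.nonneg_iff.mp (hρ.conjTranspose_mul_mul_same X).trace_nonneg |>.1

theorem isSelfAdjoint_Rop {ρ X : Matrix (Fin d) (Fin d) ℂ} (hρ : IsSelfAdjoint ρ)
    (hX : IsSelfAdjoint X) : IsSelfAdjoint (Rop ρ X) := by
  simp only [IsSelfAdjoint, Rop, star_smul, star_add, star_mul, hρ.star_eq, hX.star_eq,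
    add_comm (X * ρ)]
  norm_num

theorem isSelfAdjoint_comm {ρ H : Matrix (Fin d) (Fin d) ℂ} (hρ : IsSelfAdjoint ρ)
    (hH : IsSelfAdjoint H) : IsSelfAdjoint (comm ρ H) := by
  simp only [IsSelfAdjoint, comm, star_smul, star_sub, star_mul, hρ.star_eq, hH.star_eq,
    Complex.star_def, Complex.conj_I, neg_smul, ← smul_neg, neg_sub]

noncomputable def ropLinear (ρ : Matrix (Fin d) (Fin d) ℂ) :
    Matrix (Fin d) (Fin d) ℂ →ₗ[ℝ] Matrix (Fin d) (Fin d) ℂ where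
  toFun := Rop ρ
  map_add' X Y := by simp only [Rop, mul_add, add_mul, smul_add]; abel
  map_smul' r X := by
    simp only [Rop, Matrix.mul_smul, Matrix.smul_mul, ← smul_add, RingHom.id_apply, smul_comm r]

theorem K_mono (ρ H : Matrix (Fin d) (Fin d) ℂ) : Monotone (K ρ H) :=
  fun _ _ h => Submodule.span_mono (Set.image_mono fun _ hk => lt_of_lt_of_le hk h)

theorem Rop_mem_K {ρ H X : Matrix (Fin d) (Fin d) ℂ} {n : ℕ} (hX : X ∈ K ρ H n) :
    Rop ρ X ∈ K ρ H (n + 1) := by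
  have hmap : (K ρ H n).map (ropLinear ρ) ≤ K ρ H (n + 1) := by
    rw [K, Submodule.map_span, ← Set.image_comp]
    refine Submodule.span_mono ?_
    rintro _ ⟨k, hk, rfl⟩
    exact ⟨k + 1, Nat.succ_lt_succ hk, (Function.iterate_succ_apply' _ _ _)⟩
  exact hmap ⟨X, hX, rfl⟩

theorem K_le_selfAdjoint {ρ H : Matrix (Fin d) (Fin d) ℂ} (hρ : IsSelfAdjoint ρ)
    (hH : IsSelfAdjoint H) (n : ℕ) : K ρ H n ≤ selfAdjoint.submodule ℝ _ := by
  refine Submodule.span_le.mpr ?_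
  rintro _ ⟨k, -, rfl⟩
  show IsSelfAdjoint ((Rop ρ)^[k] (comm ρ H))
  induction k with
  | zero => exact isSelfAdjoint_comm hρ hH
  | succ k ih =>
    rw [Function.iterate_succ_apply']
    exact isSelfAdjoint_Rop hρ ih

noncomputable def taylorStep (ρ X : Matrix (Fin d) (Fin d) ℂ) : Matrix (Fin d) (Fin d) ℂ :=
  X - 2 • Rop ρ X

noncomputable def taylorElem (ρ H : Matrix (Fin d) (Fin d) ℂ) (n : ℕ) :
    Matrix (Fin d) (Fin d) ℂ :=
  2 • ∑ m ∈ range n, (taylorStep ρ)^[m] (comm ρ H)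

theorem taylorStep_iterate_mem_K (ρ H : Matrix (Fin d) (Fin d) ℂ) (m : ℕ) :
    (taylorStep ρ)^[m] (comm ρ H) ∈ K ρ H (m + 1) := by
  induction m with
  | zero => exact Submodule.subset_span ⟨0, Nat.zero_lt_one, rfl⟩
  | succ m ih =>
    rw [Function.iterate_succ_apply', taylorStep]
    exact sub_mem (K_mono ρ H (m + 1).le_succ ih) (Submodule.smul_of_tower_mem _ 2 (Rop_mem_K ih))

theorem taylorElem_mem_K (ρ H : Matrix (Fin d) (Fin d) ℂ) (n : ℕ) :
    taylorElem ρ H n ∈ K ρ H n :=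
  Submodule.smul_of_tower_mem _ 2 <| sum_mem fun m hm =>
    K_mono ρ H (Nat.succ_le_of_lt (mem_range.mp hm)) (taylorStep_iterate_mem_K ρ H m)

section map

variable {F : Type*} [FunLike F (Matrix (Fin d) (Fin d) ℂ) (Matrix (Fin d) (Fin d) ℂ)]
  [AlgHomClass F ℂ (Matrix (Fin d) (Fin d) ℂ) (Matrix (Fin d) (Fin d) ℂ)] (φ : F)

theorem map_Rop (ρ X : Matrix (Fin d) (Fin d) ℂ) : φ (Rop ρ X) = Rop (φ ρ) (φ X) := by
  simp only [Rop, map_smul, map_add, map_mul]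

theorem map_comm (ρ H : Matrix (Fin d) (Fin d) ℂ) : φ (comm ρ H) = comm (φ ρ) (φ H) := by
  simp only [comm, map_smul, map_sub, map_mul]

theorem map_taylorElem (ρ H : Matrix (Fin d) (Fin d) ℂ) (n : ℕ) :
    φ (taylorElem ρ H n) = taylorElem (φ ρ) (φ H) n := by
  have hstep : Function.Semiconj φ (taylorStep ρ) (taylorStep (φ ρ)) := fun X => by
    simp only [taylorStep, map_sub, map_nsmul, map_Rop]
  simp only [taylorElem, map_nsmul, map_sum, hstep.iterate_right _ _, map_comm]

end map

theorem wip_conjStarAlgAut (u : unitary (Matrix (Fin d) (Fin d) ℂ))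
    (ρ X Y : Matrix (Fin d) (Fin d) ℂ) :
    wip (Unitary.conjStarAlgAut ℂ _ u ρ) (Unitary.conjStarAlgAut ℂ _ u X)
      (Unitary.conjStarAlgAut ℂ _ u Y) = wip ρ X Y := by
  rw [wip, wip, ← map_mul, ← map_mul, ← map_add, ← map_mul, Unitary.conjStarAlgAut_apply,
    trace_mul_comm, ← mul_assoc, ← mul_assoc, Unitary.coe_star_mul_self, one_mul]

section diagonal

variable (q : Fin d → ℂ)

theorem Rop_diagonal_apply (X : Matrix (Fin d) (Fin d) ℂ) (k l : Fin d) :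
    Rop (diagonal q) X k l = (q k + q l) / 2 * X k l := by
  simp only [Rop, Matrix.smul_apply, Matrix.add_apply, diagonal_mul, mul_diagonal, smul_eq_mul]
  ring

theorem comm_diagonal_apply (H : Matrix (Fin d) (Fin d) ℂ) (k l : Fin d) :
    comm (diagonal q) H k l = Complex.I * (q k - q l) * H k l := by
  simp only [comm, Matrix.smul_apply, Matrix.sub_apply, diagonal_mul, mul_diagonal, smul_eq_mul]
  ring

theorem taylorStep_iterate_diagonal_apply (X : Matrix (Fin d) (Fin d) ℂ) (m : ℕ) (k l : Fin d) :
    (taylorStep (diagonal q))^[m] X k l = (1 - q k - q l) ^ m * X k l := by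
  induction m with
  | zero => simp
  | succ m ih =>
    rw [Function.iterate_succ_apply', taylorStep, Matrix.sub_apply, Matrix.smul_apply,
      Rop_diagonal_apply, ih, nsmul_eq_mul]
    push_cast
    ring

theorem taylorElem_diagonal_apply (H : Matrix (Fin d) (Fin d) ℂ) (n : ℕ) (k l : Fin d) :
    taylorElem (diagonal q) H n k l =
      2 * (∑ m ∈ range n, (1 - q k - q l) ^ m) * (Complex.I * (q k - q l) * H k l) := by
  simp only [taylorElem, Matrix.smul_apply, Matrix.sum_apply, taylorStep_iterate_diagonal_apply,
    comm_diagonal_apply, nsmul_eq_mul, ← sum_mul]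
  push_cast
  ring

theorem wip_diagonal (X Y : Matrix (Fin d) (Fin d) ℂ) :
    wip (diagonal q) X Y = (∑ k, ∑ l, (q k + q l) / 2 * (X k l * Y l k)).re := by
  have hswap : ∑ k, ∑ l, q k * (Y k l * X l k) = ∑ k, ∑ l, q l * (X k l * Y l k) := by
    rw [sum_comm]; simp only [mul_comm (Y _ _)]
  rw [wip]
  congr 1
  simp only [trace, Matrix.diag, diagonal_mul]
  simp only [Matrix.add_apply, mul_apply, mul_add, sum_add_distrib, mul_sum, hswap, add_mul,
    add_div, sum_div, div_mul_eq_mul_div]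

end diagonal

theorem re_taylor_gap_entry {a b S : ℝ} {c ℓ : ℂ}
    (hℓ : ((a + b) / 2 : ℂ) * ℓ = Complex.I * (a - b) * c) :
    2 * (((a + b) / 2 : ℂ) * (ℓ * (2 * S * (Complex.I * (b - a) * starRingEnd ℂ c)))).re -
        (((a + b) / 2 : ℂ) * (2 * S * (Complex.I * (a - b) * c) *
          (2 * S * (Complex.I * (b - a) * starRingEnd ℂ c)))).re =
      2 * ((a - b) ^ 2 * (2 * S - (a + b) * S ^ 2) * Complex.normSq c) := by
  have h : 2 * (((a + b) / 2 : ℂ) * (ℓ * (2 * S * (Complex.I * (b - a) * starRingEnd ℂ c)))) -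
        ((a + b) / 2 : ℂ) * (2 * S * (Complex.I * (a - b) * c) *
          (2 * S * (Complex.I * (b - a) * starRingEnd ℂ c))) =
      ((2 * ((a - b) ^ 2 * (2 * S - (a + b) * S ^ 2) * Complex.normSq c) : ℝ) : ℂ) := by
    push_cast
    rw [← Complex.mul_conj]
    linear_combination (4 * S * (Complex.I * (b - a) * starRingEnd ℂ c)) * hℓ +
      (2 * (a + b) * S ^ 2 - 4 * S) * (a - b) ^ 2 * c * starRingEnd ℂ c * Complex.I_sq
  simpa only [Complex.sub_re, Complex.mul_re, Complex.re_ofNat, Complex.im_ofNat, zero_mul,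
    sub_zero, Complex.ofReal_re] using congrArg Complex.re h

theorem two_mul_wip_taylorElem_sub_diagonal (p : Fin d → ℝ) {H L : Matrix (Fin d) (Fin d) ℂ}
    (hH : H.IsHermitian)
    (hL : Rop (diagonal fun k => (p k : ℂ)) L = comm (diagonal fun k => (p k : ℂ)) H) (n : ℕ) :
    2 * wip (diagonal fun k => (p k : ℂ)) L (taylorElem (diagonal fun k => (p k : ℂ)) H n) -
        wip (diagonal fun k => (p k : ℂ)) (taylorElem (diagonal fun k => (p k : ℂ)) H n)
          (taylorElem (diagonal fun k => (p k : ℂ)) H n) =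
      2 * ∑ k, ∑ l, (p k - p l) ^ 2 * (∑ m ∈ range (2 * n), (1 - p k - p l) ^ m) *
        Complex.normSq (H k l) := by
  set q : Fin d → ℂ := fun k => (p k : ℂ)
  set Z := taylorElem (diagonal q) H n
  have hentry : ∀ k l, 2 * ((q k + q l) / 2 * (L k l * Z l k)).re -
      ((q k + q l) / 2 * (Z k l * Z l k)).re =
      2 * ((p k - p l) ^ 2 * (∑ m ∈ range (2 * n), (1 - p k - p l) ^ m) *
        Complex.normSq (H k l)) := fun k l => by
    have hS : ∑ m ∈ range n, (1 - q k - q l) ^ m =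
        ((∑ m ∈ range n, (1 - p k - p l) ^ m : ℝ) : ℂ) := by
      push_cast; rfl
    have hZkl : Z k l = 2 * (∑ m ∈ range n, (1 - q k - q l) ^ m) *
        (Complex.I * (q k - q l) * H k l) := taylorElem_diagonal_apply q H n k l
    have hZlk : Z l k = 2 * (∑ m ∈ range n, (1 - q k - q l) ^ m) *
        (Complex.I * (q l - q k) * starRingEnd ℂ (H k l)) := by
      simp only [Z, taylorElem_diagonal_apply, ← hH.apply l k, Complex.star_def,
        sub_right_comm (1 : ℂ) (q l)]
    have hLkl := Rop_diagonal_apply q L k l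
    rw [hL, comm_diagonal_apply] at hLkl
    rw [hZkl, hZlk, hS, geom_sum_range_two_mul, sub_sub, sub_sub_cancel]
    exact re_taylor_gap_entry hLkl.symm
  calc _ = ∑ k, ∑ l, (2 * ((q k + q l) / 2 * (L k l * Z l k)).re -
        ((q k + q l) / 2 * (Z k l * Z l k)).re) := by
        simp only [wip_diagonal, Complex.re_sum, mul_sum, sum_sub_distrib]
    _ = _ := by
      rw [mul_sum]
      refine sum_congr rfl fun k _ => ?_
      rw [mul_sum]
      exact sum_congr rfl fun l _ => hentry k l

section spectral

variable {ρ : Matrix (Fin d) (Fin d) ℂ} {p : Fin d → ℝ} {v : Fin d → (Fin d → ℂ)}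

theorem star_transpose_of_mul_self (horth : ∀ k l, star (v k) ⬝ᵥ v l = (if k = l then 1 else 0)) :
    star (of v)ᵀ * (of v)ᵀ = 1 := by
  ext k l
  simpa only [mul_apply, star_apply, transpose_apply, of_apply, RCLike.star_def, one_apply,
    dotProduct, Pi.star_apply] using horth k l

theorem eq_transpose_of_mul_diagonal_mul_star
    (hρ : ρ = ∑ k, (p k : ℂ) • vecMulVec (v k) (star (v k))) :
    ρ = (of v)ᵀ * diagonal (fun k => (p k : ℂ)) * star (of v)ᵀ := by
  ext i j
  rw [mul_apply]
  simp only [hρ, Complex.coe_smul, Matrix.sum_apply, Matrix.smul_apply, vecMulVec_apply,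
    Pi.star_apply, RCLike.star_def, Complex.real_smul, mul_diagonal, transpose_apply, of_apply,
    star_apply, mul_assoc]
  exact sum_congr rfl fun c _ => mul_left_comm _ _ _

theorem star_transpose_of_mul_mul_apply (X : Matrix (Fin d) (Fin d) ℂ) (k l : Fin d) :
    (star (of v)ᵀ * X * (of v)ᵀ) k l = star (v k) ⬝ᵥ X *ᵥ v l := by
  simp only [mul_apply, star_apply, transpose_apply, of_apply, RCLike.star_def, sum_mul, mul_assoc,
    dotProduct, Pi.star_apply, mulVec, mul_sum]
  exact sum_comm

open ComplexOrder in
theorem posSemidef_of_eq_sum (hρ : ρ = ∑ k, (p k : ℂ) • vecMulVec (v k) (star (v k)))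
    (hp : ∀ k, 0 ≤ p k) : ρ.PosSemidef := by
  have hD : (diagonal fun k => (p k : ℂ)).PosSemidef :=
    posSemidef_diagonal_iff.mpr fun k => Complex.zero_le_real.mpr (hp k)
  rw [eq_transpose_of_mul_diagonal_mul_star hρ]
  exact hD.mul_mul_conjTranspose_same _

theorem two_mul_wip_taylorElem_sub (hρ : ρ = ∑ k, (p k : ℂ) • vecMulVec (v k) (star (v k)))
    (horth : ∀ k l, star (v k) ⬝ᵥ v l = (if k = l then 1 else 0))
    {H L : Matrix (Fin d) (Fin d) ℂ} (hH : H.IsHermitian) (hL : Rop ρ L = comm ρ H)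
    {n : ℕ} (hn : 1 ≤ n) :
    2 * wip ρ L (taylorElem ρ H n) - wip ρ (taylorElem ρ H n) (taylorElem ρ H n) =
      BTaySum p v H (2 * n - 1) := by
  let u : unitary (Matrix (Fin d) (Fin d) ℂ) :=
    ⟨(of v)ᵀ, mem_unitaryGroup_iff'.mpr (star_transpose_of_mul_self horth)⟩
  let e := Unitary.conjStarAlgAut ℂ (Matrix (Fin d) (Fin d) ℂ) (star u)
  have he : ∀ X, e X = star (of v)ᵀ * X * (of v)ᵀ := fun X => by
    simp only [e, u, Unitary.conjStarAlgAut_apply, Unitary.coe_star, star_star]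
  have hD : e ρ = diagonal fun k => (p k : ℂ) := by
    rw [he, eq_transpose_of_mul_diagonal_mul_star hρ]
    simp only [← mul_assoc, star_transpose_of_mul_self horth, one_mul]
    rw [mul_assoc, star_transpose_of_mul_self horth, mul_one]
  have hH' : (e H).IsHermitian := by
    rw [IsHermitian, ← star_eq_conjTranspose, ← map_star, hH.star_eq]
  have hL' := congrArg e hL
  rw [map_Rop, map_comm, hD] at hL'
  rw [← wip_conjStarAlgAut (star u), ← wip_conjStarAlgAut (star u) ρ, map_taylorElem, hD,
    two_mul_wip_taylorElem_sub_diagonal p hH' hL', BTaySum, Nat.sub_add_cancel (by omega)]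
  simp only [he, star_transpose_of_mul_mul_apply]

end spectral

theorem stmt18_general {d : ℕ} (ρ : Matrix (Fin d) (Fin d) ℂ) (p : Fin d → ℝ) (v : Fin d → (Fin d → ℂ))
    (hρ : ρ = ∑ k, (p k : ℂ) • vecMulVec (v k) (star (v k)))
    (horth : ∀ k l, star (v k) ⬝ᵥ v l = (if k = l then 1 else 0))
    (hppos : ∀ k, 0 ≤ p k) (H : Matrix (Fin d) (Fin d) ℂ) (hH : H.IsHermitian)
    (L : Matrix (Fin d) (Fin d) ℂ) (hLX : memX p v L) (hL : Rop ρ L = comm ρ H) :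
    ∀ n : ℕ, 1 ≤ n → ∀ P, IsProj ρ H n L P →
      BTaySum p v H (2 * n - 1) ≤ wip ρ P P ∧ wip ρ P P ≤ wip ρ L L := by
  intro n hn P ⟨hPK, hLP⟩
  have hρpsd := posSemidef_of_eq_sum hρ hppos
  have hKherm : ∀ X ∈ K ρ H n, X.IsHermitian := fun X hX => K_le_selfAdjoint hρpsd.1 hH n hX
  have hZK := taylorElem_mem_K ρ H n
  constructor
  · rw [← two_mul_wip_taylorElem_sub hρ horth hH hL hn]
    exact (wipForm ρ).two_mul_sub_le_of_sub_orthogonal (wipForm_isSymm ρ) (hLP _ hZK)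
      (wip_self_nonneg hρpsd ((hKherm P hPK).sub (hKherm _ hZK)))
  · exact (wipForm ρ).apply_self_le_of_sub_orthogonal (wipForm_isSymm ρ) (hLP P hPK)
      (wip_self_nonneg hρpsd (hLX.1.sub (hKherm P hPK)))

/-- The n-th Krylov bound dominates the (2n−1)-th Taylor bound:
B_{2n−1}^{Tay} ≤ B_n^{Kry} ≤ F_Q. -/
theorem stmt18 {d : ℕ} (ρ : Matrix (Fin d) (Fin d) ℂ) (p : Fin d → ℝ) (v : Fin d → (Fin d → ℂ))
    (hρ : ρ = ∑ k, (p k : ℂ) • vecMulVec (v k) (star (v k)))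
    (horth : ∀ k l, star (v k) ⬝ᵥ v l = (if k = l then 1 else 0))
    (hppos : ∀ k, 0 ≤ p k) (hptr : ∑ k, p k = 1) (H : Matrix (Fin d) (Fin d) ℂ) (hH : H.IsHermitian)
    (L : Matrix (Fin d) (Fin d) ℂ) (hLX : memX p v L) (hL : Rop ρ L = comm ρ H)
    (hFQ : 0 < FQ p v H) :
    ∀ n : ℕ, 1 ≤ n → ∀ P, IsProj ρ H n L P →
      BTaySum p v H (2 * n - 1) ≤ wip ρ P P ∧ wip ρ P P ≤ wip ρ L L :=
  stmt18_general ρ p v hρ horth hppos H hH L hLX hL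

end KST
end
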